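/- arXiv:2002.05970 — 5 statements merged into one kernel-verified Lean document; each statement's English description precedes it below -/
import Mathlib

section
/- Let Ω be a finite set and f : Ω × Ω → ℝ≥0. For a finite string W = (w_1,...,w_n) of elements of Ω define φ(W) = (1/n) ∑_{i=1}^n f(w_i, w_{i+1}) with w_{n+1} := w_1. For an infinite sequence π define φ(π) = limsup_{n→∞} (1/n) ∑_{i=1}^n f(π_i, π_{i+1}). Then for every infinite sequence π and every N ≥ 1, φ(π) ≤ max_{W ∈ W_N} φ(W) + (max f)/N, where W_N is the (finite, nonempty) set of strings of length at most N. -/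
open Filter Finset

/-- Cyclic average of `f` over a finite string `w` of length `n`:
`φ(w) = (1/n) ∑_{i=1}^n f(w_i, w_{i+1})` with `w_{n+1} := w_1`. -/
noncomputable def cycAvg {Ω : Type*} (f : Ω × Ω → ℝ) {n : ℕ} (w : Fin n → Ω) : ℝ :=
  (1 / (n : ℝ)) * ∑ i : Fin n, f (w i, w ⟨((i : ℕ) + 1) % n, Nat.mod_lt _ i.pos⟩)

/-- limsup Cesàro average of `f` along an infinite sequence `π`. -/
noncomputable def cesaro {Ω : Type*} (f : Ω × Ω → ℝ) (π : ℕ → Ω) : ℝ :=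
  Filter.limsup (fun n : ℕ => (1 / (n : ℝ)) * ∑ i ∈ Finset.range n, f (π i, π (i + 1)))
    Filter.atTop

/-- For every infinite sequence `π` and `N ≥ 1`, the limsup Cesàro average is bounded by the
best cyclic average over strings of length at most `N`, plus `(max f)/N`. -/
theorem stmt0 {Ω : Type*} [Fintype Ω] [Nonempty Ω] (f : Ω × Ω → ℝ)
    (hf : ∀ p, 0 ≤ f p) (π : ℕ → Ω) (N : ℕ) (hN : 1 ≤ N) :
    ∃ n, 1 ≤ n ∧ n ≤ N ∧ ∃ W : Fin n → Ω,
      cesaro f π ≤ cycAvg f W + (Finset.univ.sup' Finset.univ_nonempty f) / N := by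
  classical
  have hNpos : 0 < N := hN
  have hNR : (0 : ℝ) < N := by exact_mod_cast hNpos
  set M : ℝ := Finset.univ.sup' Finset.univ_nonempty f with hMdef
  have hfM : ∀ p, f p ≤ M := fun p => Finset.le_sup' f (Finset.mem_univ p)
  have hM0 : 0 ≤ M := le_trans (hf _) (hfM (Classical.arbitrary _))
  obtain ⟨W, hW⟩ := Finite.exists_max (fun w : Fin N → Ω => cycAvg f w)
  refine ⟨N, hN, le_refl N, W, ?_⟩
  set C : ℝ := cycAvg f W with hCdef
  have hC0 : 0 ≤ C := by
    apply mul_nonneg (by positivity)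
    exact Finset.sum_nonneg fun i _ => hf _
  -- block bound : each block of length N, closed into a cycle
  have hblock : ∀ k : ℕ,
      ∑ j ∈ Finset.range N, f (π (k * N + j), π (k * N + j + 1)) ≤ N * C + M := by
    intro k
    set w : Fin N → Ω := fun j => π (k * N + (j : ℕ)) with hwdef
    have hcyc : (N : ℝ) * cycAvg f w =
        ∑ i : Fin N, f (w i, w ⟨((i : ℕ) + 1) % N, Nat.mod_lt _ i.pos⟩) := by
      rw [cycAvg]; field_simp
    have hsum : ∑ j ∈ Finset.range N, f (π (k * N + j), π (k * N + j + 1))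
        = ∑ i : Fin N, f (π (k * N + (i : ℕ)), π (k * N + (i : ℕ) + 1)) :=
      (Fin.sum_univ_eq_sum_range _ _).symm
    have hdiff : ∑ i : Fin N, (f (π (k * N + (i : ℕ)), π (k * N + (i : ℕ) + 1))
        - f (w i, w ⟨((i : ℕ) + 1) % N, Nat.mod_lt _ i.pos⟩)) ≤ M := by
      have hlast : (⟨N - 1, Nat.sub_lt hNpos one_pos⟩ : Fin N) ∈ Finset.univ :=
        Finset.mem_univ _
      rw [Finset.sum_eq_single_of_mem _ hlast]
      · simpa using sub_le_sub (hfM _) (hf _)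
      · intro i _ hi
        have hilt : (i : ℕ) + 1 < N := by
          rcases Nat.lt_or_ge ((i : ℕ) + 1) N with h | h
          · exact h
          · exfalso
            apply hi
            have : (i : ℕ) = N - 1 := by omega
            exact Fin.ext this
        have hmod : ((i : ℕ) + 1) % N = (i : ℕ) + 1 := Nat.mod_eq_of_lt hilt
        have : w ⟨((i : ℕ) + 1) % N, Nat.mod_lt _ i.pos⟩ = π (k * N + (i : ℕ) + 1) := by
          simp only [hwdef, hmod]
          congr 1
          all_goals omega
        rw [this]
        simp [hwdef]
    have hWle : cycAvg f w ≤ C := hW w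
    have : ∑ i : Fin N, f (π (k * N + (i : ℕ)), π (k * N + (i : ℕ) + 1))
        ≤ (N : ℝ) * cycAvg f w + M := by
      rw [hcyc]
      have := hdiff
      rw [Finset.sum_sub_distrib] at this
      linarith
    rw [hsum]
    calc ∑ i : Fin N, f (π (k * N + (i : ℕ)), π (k * N + (i : ℕ) + 1))
        ≤ (N : ℝ) * cycAvg f w + M := this
      _ ≤ (N : ℝ) * C + M := by nlinarith
  -- multi-block bound
  have hS : ∀ m : ℕ,
      ∑ i ∈ Finset.range (m * N), f (π i, π (i + 1)) ≤ m * ((N : ℝ) * C + M) := by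
    intro m
    induction m with
    | zero => simp
    | succ m ih =>
        have hsplit : ∑ i ∈ Finset.range ((m + 1) * N), f (π i, π (i + 1))
            = ∑ i ∈ Finset.range (m * N), f (π i, π (i + 1))
              + ∑ j ∈ Finset.range N, f (π (m * N + j), π (m * N + j + 1)) := by
          rw [Nat.succ_mul, Finset.sum_range_add]
        rw [hsplit]
        push_cast
        have := hblock m
        linarith
  -- pointwise bound for large n
  have hmain : ∀ n : ℕ, 1 ≤ n →
      (1 / (n : ℝ)) * ∑ i ∈ Finset.range n, f (π i, π (i + 1))
        ≤ (C + M / N) + (N : ℝ) * M / n := by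
    intro n hn
    have hnR : (0 : ℝ) < n := by exact_mod_cast hn
    set m : ℕ := n / N with hmdef
    have hmN : m * N ≤ n := Nat.div_mul_le_self n N
    have hnm : n < (m + 1) * N := by
      calc n = m * N + n % N := by rw [hmdef]; exact (Nat.div_add_mod' n N).symm
        _ < m * N + N := Nat.add_lt_add_left (Nat.mod_lt n hNpos) _
        _ = (m + 1) * N := by ring
    -- S_n ≤ S_{mN} + (n - mN) * M
    have hSn : ∑ i ∈ Finset.range n, f (π i, π (i + 1))
        ≤ ∑ i ∈ Finset.range (m * N), f (π i, π (i + 1)) + ((n : ℝ) - m * N) * M := by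
      have hsplit := Finset.sum_range_add (fun i => f (π i, π (i + 1))) (m * N) (n - m * N)
      rw [Nat.add_sub_cancel' hmN] at hsplit
      rw [hsplit]
      have : ∑ j ∈ Finset.range (n - m * N), f (π (m * N + j), π (m * N + j + 1))
          ≤ (n - m * N : ℕ) * M := by
        calc ∑ j ∈ Finset.range (n - m * N), f (π (m * N + j), π (m * N + j + 1))
            ≤ ∑ _j ∈ Finset.range (n - m * N), M := Finset.sum_le_sum fun j _ => hfM _
          _ = (n - m * N : ℕ) * M := by simp [mul_comm]
      have hcast : ((n - m * N : ℕ) : ℝ) = (n : ℝ) - m * N := by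
        push_cast [Nat.cast_sub hmN]; ring
      linarith [hcast ▸ this]
    have hnmN : ((n : ℝ) - m * N) ≤ N := by
      have h2 : (n : ℝ) < (m + 1) * N := by exact_mod_cast hnm
      push_cast at h2
      linarith
    have hmNn : (m : ℝ) * N ≤ n := by exact_mod_cast hmN
    have hSm := hS m
    -- combine
    have hfinal : ∑ i ∈ Finset.range n, f (π i, π (i + 1))
        ≤ (m : ℝ) * N * C + m * M + N * M := by
      have h1 : ((n : ℝ) - m * N) * M ≤ N * M :=
        mul_le_mul_of_nonneg_right hnmN hM0
      nlinarith
    rw [one_div, inv_mul_le_iff₀ hnR]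
    calc ∑ i ∈ Finset.range n, f (π i, π (i + 1))
          ≤ (m : ℝ) * N * C + m * M + N * M := hfinal
        _ ≤ ((C + M / N) + N * M / n) * n := by
            have h2 : (m : ℝ) * N * C ≤ n * C := by nlinarith
            have h3 : (m : ℝ) * M ≤ n / N * M := by
              have hm : (m : ℝ) ≤ n / N := by
                rw [le_div_iff₀ hNR]; linarith
              exact mul_le_mul_of_nonneg_right hm hM0
            have h4 : (N : ℝ) * M = N * M / n * n := by field_simp
            have h5 : (n : ℝ) / N * M = M / N * n := by ring
            nlinarith [h2, h3]
        _ = (n : ℝ) * ((C + M / N) + (N : ℝ) * M / n) := by ring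
  -- limsup argument
  have hb : Tendsto (fun n : ℕ => (C + M / N) + (N : ℝ) * M / n) atTop (nhds (C + M / N)) := by
    have h0 : Tendsto (fun n : ℕ => ((N : ℝ) * M) / n) atTop (nhds 0) :=
      tendsto_const_div_atTop_nhds_zero_nat _
    simpa using tendsto_const_nhds.add h0
  have hle : cesaro f π ≤ C + M / N := by
    rw [cesaro]
    have h1 : Filter.limsup (fun n : ℕ =>
        (1 / (n : ℝ)) * ∑ i ∈ Finset.range n, f (π i, π (i + 1))) atTop
        ≤ Filter.limsup (fun n : ℕ => (C + M / N) + (N : ℝ) * M / n) atTop := by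
      apply Filter.limsup_le_limsup
      · filter_upwards [Filter.eventually_ge_atTop 1] with n hn
        exact hmain n hn
      · exact Filter.isCoboundedUnder_le_of_le atTop (x := 0) fun i =>
          mul_nonneg (by positivity) (Finset.sum_nonneg fun j _ => hf _)
      · exact hb.isBoundedUnder_le
    calc _ ≤ _ := h1
      _ = C + M / N := hb.limsup_eq
  exact hle
end

section
/- Let Ω be a finite set of size m and f : Ω × Ω → ℝ≥0, with φ the cyclic average as above extended to infinite sequences via limsup of Cesàro averages of f along the sequence. Then there exists a periodic sequence π* whose period (w_1,...,w_P) consists of pairwise distinct elements of Ω (hence P ≤ m) such that φ(π*) = sup over all infinite sequences π of φ(π). In particular the supremum is attained. -/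
open Filter Finset

/-- The periodic sequence with period `w`. -/
def periodicExt {Ω : Type*} {P : ℕ} (hP : 0 < P) (w : Fin P → Ω) : ℕ → Ω :=
  fun i => w ⟨i % P, Nat.mod_lt _ hP⟩

/-- The sum of `f` along the cycle `w`. -/
def cycSum {Ω : Type*} (f : Ω × Ω → ℝ) (P : ℕ) (hP : 0 < P) (w : Fin P → Ω) : ℝ :=
  ∑ k ∈ Finset.range P, f (w ⟨k % P, Nat.mod_lt _ hP⟩, w ⟨(k + 1) % P, Nat.mod_lt _ hP⟩)

lemma cycSum_congr {Ω : Type*} (f : Ω × Ω → ℝ) {P Q : ℕ} (hP : 0 < P) (hQ : 0 < Q)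
    (h : P = Q) (w' : Fin P → Ω) (w : Fin Q → Ω)
    (hw : ∀ (k : ℕ) (hk : k < P) (hk' : k < Q), w' ⟨k, hk⟩ = w ⟨k, hk'⟩) :
    cycSum f P hP w' = cycSum f Q hQ w := by
  subst h
  unfold cycSum
  apply Finset.sum_congr rfl
  intro k _
  rw [hw (k % P) (Nat.mod_lt _ hP) (Nat.mod_lt _ hP),
    hw ((k + 1) % P) (Nat.mod_lt _ hP) (Nat.mod_lt _ hP)]

/-- The mean of `f` along a candidate cycle. -/
noncomputable def cmean {Ω : Type*} [Fintype Ω] (f : Ω × Ω → ℝ)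
    (t : (P : Fin (Fintype.card Ω)) × (Fin (P.val + 1) → Ω)) : ℝ :=
  cycSum f (t.1.val + 1) (Nat.succ_pos _) t.2 / ((t.1.val + 1 : ℕ) : ℝ)

lemma sum_shift_periodic {a : ℕ → ℝ} {P : ℕ} (hper : ∀ i, a (i + P) = a i) (n : ℕ) :
    ∑ i ∈ Finset.range (n + P), a i
      = ∑ i ∈ Finset.range n, a i + ∑ i ∈ Finset.range P, a i := by
  induction n with
  | zero => simp
  | succ k ih =>
    have h : k + 1 + P = (k + P) + 1 := by ring
    rw [h, Finset.sum_range_succ, ih, Finset.sum_range_succ, hper]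
    ring

lemma sum_periodic_mul {a : ℕ → ℝ} {P : ℕ} (hper : ∀ i, a (i + P) = a i) (q r : ℕ) :
    ∑ i ∈ Finset.range (q * P + r), a i
      = q * ∑ i ∈ Finset.range P, a i + ∑ i ∈ Finset.range r, a i := by
  induction q with
  | zero => simp
  | succ k ih =>
    have h : (k + 1) * P + r = (k * P + r) + P := by ring
    rw [h, sum_shift_periodic hper, ih]
    push_cast
    ring

lemma tendsto_avg_periodic {a : ℕ → ℝ} {P : ℕ} (hP : 0 < P) (ha : ∀ i, 0 ≤ a i)
    (hper : ∀ i, a (i + P) = a i) :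
    Filter.Tendsto (fun n : ℕ => (1 / (n : ℝ)) * ∑ i ∈ Finset.range n, a i) Filter.atTop
      (nhds ((∑ i ∈ Finset.range P, a i) / P)) := by
  set SP := ∑ i ∈ Finset.range P, a i with hSPdef
  have hSP0 : 0 ≤ SP := Finset.sum_nonneg fun i _ => ha i
  have hP0 : (0 : ℝ) < P := by exact_mod_cast hP
  have key : ∀ n : ℕ, 1 ≤ n →
      ‖(1 / (n : ℝ)) * ∑ i ∈ Finset.range n, a i - SP / P‖ ≤ (2 * SP) / n := by
    intro n hn
    have hq : n = n / P * P + n % P := (Nat.div_add_mod' n P).symm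
    have hr : n % P < P := Nat.mod_lt _ hP
    have hSn : ∑ i ∈ Finset.range n, a i
        = (n / P : ℕ) * SP + ∑ i ∈ Finset.range (n % P), a i := by
      nth_rewrite 1 [hq]
      exact sum_periodic_mul hper _ _
    set Sr := ∑ i ∈ Finset.range (n % P), a i with hSrdef
    have hSr0 : 0 ≤ Sr := Finset.sum_nonneg fun i _ => ha i
    have hSrP : Sr ≤ SP := Finset.sum_le_sum_of_subset_of_nonneg
      (Finset.range_subset_range.2 hr.le) (fun i _ _ => ha i)
    have hn0 : (0 : ℝ) < n := by exact_mod_cast hn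
    have hcast : (n : ℝ) = (n / P : ℕ) * P + (n % P : ℕ) := by exact_mod_cast hq
    have hrR : ((n % P : ℕ) : ℝ) ≤ (P : ℝ) := by exact_mod_cast hr.le
    have hrR0 : (0 : ℝ) ≤ ((n % P : ℕ) : ℝ) := by positivity
    have hne : ((n / P : ℕ) : ℝ) * P + ((n % P : ℕ) : ℝ) ≠ 0 := by
      rw [← hcast]; exact ne_of_gt hn0
    have heq : (1 / (n : ℝ)) * ∑ i ∈ Finset.range n, a i - SP / P
        = ((P : ℝ) * Sr - ((n % P : ℕ) : ℝ) * SP) / ((n : ℝ) * P) := by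
      rw [hSn, hcast]
      field_simp
      ring
    rw [heq, Real.norm_eq_abs, abs_div, abs_of_pos (by positivity : (0:ℝ) < (n:ℝ) * P)]
    have hnum : |(P : ℝ) * Sr - ((n % P : ℕ) : ℝ) * SP| ≤ 2 * P * SP := by
      rw [abs_le]
      constructor
      · nlinarith
      · nlinarith
    calc |(P : ℝ) * Sr - ((n % P : ℕ) : ℝ) * SP| / ((n : ℝ) * P)
        ≤ (2 * P * SP) / ((n : ℝ) * P) := by gcongr
      _ = 2 * SP / n := by
          field_simp
  rw [tendsto_iff_norm_sub_tendsto_zero]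
  apply squeeze_zero' (Filter.Eventually.of_forall fun n => norm_nonneg _)
    (Filter.eventually_atTop.2 ⟨1, key⟩)
  exact tendsto_const_div_atTop_nhds_zero_nat (2 * SP)

lemma cesaro_periodic {Ω : Type*} (f : Ω × Ω → ℝ) (hf : ∀ p, 0 ≤ f p) {P : ℕ} (hP : 0 < P)
    (w : Fin P → Ω) :
    cesaro f (periodicExt hP w) =
      (∑ i ∈ Finset.range P,
        f (periodicExt hP w i, periodicExt hP w (i + 1))) / P := by
  set π := periodicExt hP w with hπ
  have hper : ∀ i, f (π (i + P), π (i + P + 1)) = f (π i, π (i + 1)) := by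
    intro i
    have h1 : π (i + P) = π i := congrArg w (Fin.ext (Nat.add_mod_right i P))
    have h2 : π (i + P + 1) = π (i + 1) := by
      apply congrArg w
      apply Fin.ext
      show (i + P + 1) % P = (i + 1) % P
      rw [show i + P + 1 = (i + 1) + P by omega]
      exact Nat.add_mod_right _ _
    rw [h1, h2]
  exact (tendsto_avg_periodic hP (fun i => hf _) hper).limsup_eq

lemma walk_bound {Ω : Type*} [Fintype Ω] [Nonempty Ω] (f : Ω × Ω → ℝ) (hf : ∀ p, 0 ≤ f p)
    {M C : ℝ} (hC : ∀ p, f p ≤ C) (hC0 : 0 ≤ C) (hM0 : 0 ≤ M)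
    (hM : ∀ (P : ℕ) (hP : 0 < P) (w : Fin P → Ω), Function.Injective w →
      P ≤ Fintype.card Ω → cycSum f P hP w ≤ P * M) :
    ∀ n (π : ℕ → Ω),
      ∑ i ∈ Finset.range n, f (π i, π (i + 1)) ≤ n * M + (Fintype.card Ω) * C := by
  classical
  intro n
  induction n using Nat.strong_induction_on with
  | _ n ih =>
    intro π
    by_cases hnm : n ≤ Fintype.card Ω
    · have h1 : ∑ i ∈ Finset.range n, f (π i, π (i + 1)) ≤ (n : ℝ) * C := by
        calc ∑ i ∈ Finset.range n, f (π i, π (i + 1)) ≤ ∑ _i ∈ Finset.range n, C :=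
            Finset.sum_le_sum fun i _ => hC _
          _ = (n : ℝ) * C := by rw [Finset.sum_const, Finset.card_range]; ring
      have h2 : (n : ℝ) ≤ (Fintype.card Ω : ℝ) := by exact_mod_cast hnm
      have h3 : (0 : ℝ) ≤ (n : ℝ) * M := by positivity
      nlinarith
    · push_neg at hnm
      -- pigeonhole: a repeated vertex among π 0, ..., π (card Ω)
      have hcard : Fintype.card Ω < Fintype.card (Fin (Fintype.card Ω + 1)) := by simp
      obtain ⟨x, y, hxy, hpxy⟩ := Fintype.exists_ne_map_eq_of_card_lt
        (fun k : Fin (Fintype.card Ω + 1) => π k.val) hcard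
      have hQ : ∃ j, ∃ i, i < j ∧ π i = π j := by
        rcases lt_or_gt_of_ne (fun h : x.val = y.val => hxy (Fin.ext h)) with h | h
        · exact ⟨y.val, x.val, h, hpxy⟩
        · exact ⟨x.val, y.val, h, hpxy.symm⟩
      set j := Nat.find hQ with hjdef
      obtain ⟨i₀, hi₀j, heq⟩ := Nat.find_spec hQ
      have hjm : j ≤ Fintype.card Ω := by
        have hxm : x.val ≤ Fintype.card Ω := Nat.lt_succ_iff.mp x.isLt
        have hym : y.val ≤ Fintype.card Ω := Nat.lt_succ_iff.mp y.isLt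
        rcases lt_or_gt_of_ne (fun h : x.val = y.val => hxy (Fin.ext h)) with h | h
        · exact le_trans (Nat.find_min' hQ ⟨x.val, h, hpxy⟩) hym
        · exact le_trans (Nat.find_min' hQ ⟨y.val, h, hpxy.symm⟩) hxm
      have hinj : ∀ s t, s < t → t < j → π s ≠ π t := by
        intro s t hst htj hcon
        exact Nat.find_min hQ htj ⟨s, hst, hcon⟩
      set d := j - i₀ with hddef
      have hd0 : 0 < d := by omega
      have hdj : i₀ + d = j := by omega
      have hπj : π (i₀ + d) = π i₀ := by rw [hdj]; exact heq.symm
      set w : Fin d → Ω := fun k => π (i₀ + k.val) with hwdef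
      have hwinj : Function.Injective w := by
        intro a b hab
        by_contra hne
        have hv : a.val ≠ b.val := fun h => hne (Fin.ext h)
        rcases hv.lt_or_gt with h | h
        · exact hinj (i₀ + a.val) (i₀ + b.val) (by omega) (by omega) hab
        · exact hinj (i₀ + b.val) (i₀ + a.val) (by omega) (by omega) hab.symm
      have hcyc : cycSum f d hd0 w ≤ (d : ℝ) * M := hM d hd0 w hwinj (by omega)
      have hcycseg : cycSum f d hd0 w
          = ∑ k ∈ Finset.range d, f (π (i₀ + k), π (i₀ + k + 1)) := by
        unfold cycSum
        apply Finset.sum_congr rfl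
        intro k hk
        rw [Finset.mem_range] at hk
        have h1 : k % d = k := Nat.mod_eq_of_lt hk
        simp only [hwdef, h1]
        by_cases hkd : k + 1 < d
        · have h2 : (k + 1) % d = k + 1 := Nat.mod_eq_of_lt hkd
          rw [h2, show i₀ + (k + 1) = i₀ + k + 1 by omega]
        · have hk1 : k + 1 = d := by omega
          have h2 : (k + 1) % d = 0 := by rw [hk1, Nat.mod_self]
          rw [h2, show i₀ + 0 = i₀ by omega, show i₀ + k + 1 = i₀ + d by omega, hπj]
      set π' : ℕ → Ω := fun i => if i < i₀ then π i else π (i + d) with hπ'def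
      have hn' : n - d < n := by omega
      have hIH := ih (n - d) hn' π'
      have ha : ∀ i, i < i₀ → f (π' i, π' (i + 1)) = f (π i, π (i + 1)) := by
        intro i hi
        have h1 : π' i = π i := if_pos hi
        have h2 : π' (i + 1) = π (i + 1) := by
          by_cases h : i + 1 < i₀
          · exact if_pos h
          · have hi1 : i + 1 = i₀ := by omega
            show (if i + 1 < i₀ then π (i + 1) else π (i + 1 + d)) = π (i + 1)
            rw [if_neg h, hi1]
            exact hπj
        rw [h1, h2]
      have e1 : ∑ i ∈ Finset.range n, f (π i, π (i + 1))
          = ∑ i ∈ Finset.Ico 0 i₀, f (π i, π (i + 1))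
            + (∑ i ∈ Finset.Ico i₀ j, f (π i, π (i + 1))
              + ∑ i ∈ Finset.Ico j n, f (π i, π (i + 1))) := by
        rw [Finset.range_eq_Ico,
          ← Finset.sum_Ico_consecutive _ (Nat.zero_le i₀) (show i₀ ≤ n by omega),
          ← Finset.sum_Ico_consecutive _ (show i₀ ≤ j by omega) (show j ≤ n by omega)]
      have e2 : ∑ i ∈ Finset.range (n - d), f (π' i, π' (i + 1))
          = ∑ i ∈ Finset.Ico 0 i₀, f (π' i, π' (i + 1))
            + ∑ i ∈ Finset.Ico i₀ (n - d), f (π' i, π' (i + 1)) := by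
        rw [Finset.range_eq_Ico,
          ← Finset.sum_Ico_consecutive _ (Nat.zero_le i₀) (show i₀ ≤ n - d by omega)]
      have eA : ∑ i ∈ Finset.Ico 0 i₀, f (π' i, π' (i + 1))
          = ∑ i ∈ Finset.Ico 0 i₀, f (π i, π (i + 1)) := by
        apply Finset.sum_congr rfl
        intro i hi
        rw [Finset.mem_Ico] at hi
        exact ha i hi.2
      have eB : ∑ i ∈ Finset.Ico i₀ (n - d), f (π' i, π' (i + 1))
          = ∑ i ∈ Finset.Ico j n, f (π i, π (i + 1)) := by
        rw [Finset.sum_Ico_eq_sum_range, Finset.sum_Ico_eq_sum_range,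
          show n - d - i₀ = n - j by omega]
        apply Finset.sum_congr rfl
        intro t _
        have b1 : π' (i₀ + t) = π (j + t) := by
          show (if i₀ + t < i₀ then π (i₀ + t) else π (i₀ + t + d)) = π (j + t)
          rw [if_neg (by omega), show i₀ + t + d = j + t by omega]
        have b2 : π' (i₀ + t + 1) = π (j + t + 1) := by
          show (if i₀ + t + 1 < i₀ then π (i₀ + t + 1) else π (i₀ + t + 1 + d)) = π (j + t + 1)
          rw [if_neg (by omega), show i₀ + t + 1 + d = j + t + 1 by omega]
        rw [b1, b2]
      have eC : ∑ i ∈ Finset.Ico i₀ j, f (π i, π (i + 1))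
          = ∑ k ∈ Finset.range d, f (π (i₀ + k), π (i₀ + k + 1)) := by
        rw [Finset.sum_Ico_eq_sum_range, show j - i₀ = d from rfl]
      have hsplit : ∑ i ∈ Finset.range n, f (π i, π (i + 1))
          = ∑ i ∈ Finset.range (n - d), f (π' i, π' (i + 1))
            + ∑ k ∈ Finset.range d, f (π (i₀ + k), π (i₀ + k + 1)) := by
        rw [e1, e2, eA, eB, ← eC]
        ring
      rw [hsplit]
      have hseg : ∑ k ∈ Finset.range d, f (π (i₀ + k), π (i₀ + k + 1)) ≤ (d : ℝ) * M := by
        rw [← hcycseg]; exact hcyc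
      have hcastnd : ((n - d : ℕ) : ℝ) = (n : ℝ) - (d : ℝ) := by
        have : d ≤ n := by omega
        push_cast [this]
        ring
      calc ∑ i ∈ Finset.range (n - d), f (π' i, π' (i + 1))
            + ∑ k ∈ Finset.range d, f (π (i₀ + k), π (i₀ + k + 1))
          ≤ (((n - d : ℕ) : ℝ) * M + (Fintype.card Ω : ℝ) * C) + (d : ℝ) * M :=
            add_le_add hIH hseg
        _ = (n : ℝ) * M + (Fintype.card Ω : ℝ) * C := by rw [hcastnd]; ring

/-- There is a periodic sequence whose period consists of pairwise distinct elements of `Ω`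
(hence has length at most `|Ω|`) achieving the supremum of the limsup Cesàro average of `f`
over all infinite sequences. -/
theorem stmt2 {Ω : Type*} [Fintype Ω] [Nonempty Ω] (f : Ω × Ω → ℝ) (hf : ∀ p, 0 ≤ f p) :
    ∃ (P : ℕ) (hP : 0 < P) (w : Fin P → Ω), Function.Injective w ∧ P ≤ Fintype.card Ω ∧
      cesaro f (periodicExt hP w) = ⨆ π : ℕ → Ω, cesaro f π := by
  classical
  have hm0 : 0 < Fintype.card Ω := Fintype.card_pos
  set C : ℝ := ∑ p : Ω × Ω, f p with hCdef
  have hC : ∀ p, f p ≤ C :=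
    fun p => Finset.single_le_sum (fun q _ => hf q) (Finset.mem_univ p)
  have hC0 : 0 ≤ C := Finset.sum_nonneg fun p _ => hf p
  set S : Finset ((P : Fin (Fintype.card Ω)) × (Fin (P.val + 1) → Ω)) :=
    Finset.univ.filter (fun t => Function.Injective t.2) with hSdef
  have hSne : S.Nonempty := by
    refine ⟨⟨⟨0, hm0⟩, fun _ => Classical.arbitrary Ω⟩, ?_⟩
    rw [hSdef, Finset.mem_filter]
    have hss : ∀ a b : Fin 1, a = b := fun a b => Subsingleton.elim a b
    exact ⟨Finset.mem_univ _, fun a b _ => hss a b⟩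
  set M : ℝ := (S.image (cmean f)).max' (hSne.image (cmean f)) with hMdef
  have hMmem : M ∈ S.image (cmean f) := Finset.max'_mem _ _
  obtain ⟨t₀, ht₀S, ht₀M⟩ := Finset.mem_image.mp hMmem
  have ht₀inj : Function.Injective t₀.2 := by
    rw [hSdef, Finset.mem_filter] at ht₀S
    exact ht₀S.2
  have hMub : ∀ t ∈ S, cmean f t ≤ M :=
    fun t ht => Finset.le_max' _ _ (Finset.mem_image_of_mem _ ht)
  have hM0 : 0 ≤ M := by
    rw [← ht₀M]
    apply div_nonneg
    · exact Finset.sum_nonneg fun i _ => hf _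
    · positivity
  -- every simple cycle mean is at most M
  have hMcyc : ∀ (P : ℕ) (hP : 0 < P) (w : Fin P → Ω), Function.Injective w →
      P ≤ Fintype.card Ω → cycSum f P hP w ≤ (P : ℝ) * M := by
    intro P hP w hw hPm
    have hPP : (P - 1) + 1 = P := Nat.succ_pred_eq_of_pos hP
    have hP1m : P - 1 < Fintype.card Ω := by omega
    set w' : Fin ((P - 1) + 1) → Ω :=
      (fun k => w ⟨k.val, lt_of_lt_of_le k.isLt (le_of_eq hPP)⟩) with hw'def
    have hw' : Function.Injective w' := by
      intro a b hab
      have hv := hw hab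
      rw [Fin.mk.injEq] at hv
      exact Fin.ext hv
    have htS : (⟨⟨P - 1, hP1m⟩, w'⟩ :
        (P : Fin (Fintype.card Ω)) × (Fin (P.val + 1) → Ω)) ∈ S := by
      rw [hSdef, Finset.mem_filter]
      exact ⟨Finset.mem_univ _, hw'⟩
    have hle := hMub _ htS
    have hle2 : cycSum f ((P - 1) + 1) (Nat.succ_pos _) w' / (((P - 1) + 1 : ℕ) : ℝ) ≤ M := hle
    have hcs : cycSum f ((P - 1) + 1) (Nat.succ_pos _) w' = cycSum f P hP w :=
      cycSum_congr f (Nat.succ_pos _) hP hPP w' w (fun k hk hk' => rfl)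
    rw [hcs] at hle2
    have hpos : (0 : ℝ) < (((P - 1) + 1 : ℕ) : ℝ) := by positivity
    rw [div_le_iff₀ hpos] at hle2
    have hcast : (((P - 1) + 1 : ℕ) : ℝ) = (P : ℝ) := by exact_mod_cast congrArg Nat.cast hPP
    rw [hcast] at hle2
    linarith
  -- upper bound on every cesaro value
  have hub : ∀ π : ℕ → Ω, cesaro f π ≤ M := by
    intro π
    have hwb := walk_bound f hf hC hC0 hM0 hMcyc
    have hle : ∀ᶠ n : ℕ in atTop,
        (1 / (n : ℝ)) * ∑ i ∈ Finset.range n, f (π i, π (i + 1))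
          ≤ M + ((Fintype.card Ω : ℝ) * C) / n := by
      filter_upwards [eventually_ge_atTop 1] with n hn
      have hn0 : (0 : ℝ) < n := by exact_mod_cast hn
      rw [show (1 / (n : ℝ)) * ∑ i ∈ Finset.range n, f (π i, π (i + 1))
          = (∑ i ∈ Finset.range n, f (π i, π (i + 1))) / n from by ring,
        div_le_iff₀ hn0,
        show (M + ((Fintype.card Ω : ℝ) * C) / n) * n
          = (n : ℝ) * M + (Fintype.card Ω : ℝ) * C from by field_simp]
      exact hwb n π
    have htends : Tendsto (fun n : ℕ => M + ((Fintype.card Ω : ℝ) * C) / n) atTop (nhds M) := by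
      have h0 := tendsto_const_div_atTop_nhds_zero_nat ((Fintype.card Ω : ℝ) * C)
      simpa using (tendsto_const_nhds (x := M) (f := atTop)).add h0
    have hbdd : IsBoundedUnder (· ≤ ·) atTop
        (fun n : ℕ => M + ((Fintype.card Ω : ℝ) * C) / n) := htends.isBoundedUnder_le
    have hcob : IsCoboundedUnder (· ≤ ·) atTop
        (fun n : ℕ => (1 / (n : ℝ)) * ∑ i ∈ Finset.range n, f (π i, π (i + 1))) := by
      apply isCoboundedUnder_le_of_le atTop (x := 0)
      intro n
      exact mul_nonneg (by positivity) (Finset.sum_nonneg fun i _ => hf _)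
    calc cesaro f π
        ≤ limsup (fun n : ℕ => M + ((Fintype.card Ω : ℝ) * C) / n) atTop :=
          limsup_le_limsup hle hcob hbdd
      _ = M := htends.limsup_eq
  have hbddAbove : BddAbove (Set.range fun π : ℕ → Ω => cesaro f π) := by
    refine ⟨M, ?_⟩
    rintro x ⟨π, rfl⟩
    exact hub π
  refine ⟨t₀.1.val + 1, Nat.succ_pos _, t₀.2, ht₀inj, t₀.1.isLt, ?_⟩
  have h1 : cesaro f (periodicExt (Nat.succ_pos t₀.1.val) t₀.2)
      = cycSum f (t₀.1.val + 1) (Nat.succ_pos _) t₀.2 / ((t₀.1.val + 1 : ℕ) : ℝ) := by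
    rw [cesaro_periodic f hf (Nat.succ_pos t₀.1.val) t₀.2]
    rfl
  have h2 : cycSum f (t₀.1.val + 1) (Nat.succ_pos _) t₀.2 / ((t₀.1.val + 1 : ℕ) : ℝ) = M := ht₀M
  rw [h1, h2]
  apply le_antisymm
  · have hle := le_ciSup hbddAbove (periodicExt (Nat.succ_pos t₀.1.val) t₀.2)
    rw [h1, h2] at hle
    exact hle
  · exact ciSup_le hub
end

section
/- Let Ω be a finite set and let W̄ = (w_1,...,w_n) be a string of pairwise distinct elements of Ω, n ≥ 1. Fix U > 0 and define f : Ω × Ω → ℝ by f(w,w') = U if (w,w') = (w_i, w_{i+1}) for some i (cyclically, with w_{n+1}=w_1) and f(w,w') = 0 otherwise. Then the periodic sequence π̄ with period W̄ satisfies φ(π̄) = U, and every periodic sequence π with simple cycle different (as a cyclic word) from W̄ satisfies φ(π̄) − φ(π) ≥ U/|Ω|. -/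
open Filter Finset

/-- `u` is the same cyclic word as `w`: same length and a rotation of it. -/
def IsRotationOf {Ω : Type*} {P n : ℕ} (hn : 0 < n) (u : Fin P → Ω) (w : Fin n → Ω) : Prop :=
  P = n ∧ ∃ r : ℕ, ∀ i : Fin P, u i = w ⟨((i : ℕ) + r) % n, Nat.mod_lt _ hn⟩

lemma periodic_shift (g : ℕ → ℝ) (P : ℕ) (hg : ∀ i, g (i + P) = g i) (x k : ℕ) :
    g (x + k * P) = g x := by
  induction k with
  | zero => simp
  | succ k ihk => rw [show x + (k+1) * P = (x + k * P) + P by ring, hg, ihk]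

/-- Decomposition of a sum of a `P`-periodic function over `range (m * P + b)`. -/
lemma periodic_sum_aux (g : ℕ → ℝ) (P : ℕ) (hg : ∀ i, g (i + P) = g i) (b m : ℕ) :
    ∑ i ∈ Finset.range (m * P + b), g i
      = m * (∑ i ∈ Finset.range P, g i) + ∑ i ∈ Finset.range b, g i := by
  have hfull : ∀ m : ℕ, ∑ i ∈ Finset.range (m * P), g i
      = m * ∑ i ∈ Finset.range P, g i := by
    intro m
    induction m with
    | zero => simp
    | succ m ih =>
      rw [show (m+1) * P = m * P + P by ring, Finset.sum_range_add, ih]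
      have : ∀ x ∈ Finset.range P, g (m * P + x) = g x := fun x _ => by
        rw [show m * P + x = x + m * P by ring, periodic_shift g P hg]
      rw [Finset.sum_congr rfl this]
      push_cast; ring
  rw [Finset.sum_range_add, hfull]
  congr 1
  refine Finset.sum_congr rfl fun x _ => ?_
  rw [show m * P + x = x + m * P by ring, periodic_shift g P hg]

/-- For the reward `f` putting value `U` exactly on the consecutive (cyclic) pairs of a fixed
simple string `w`, the periodic sequence with period `w` has value `U`, and any periodic
sequence with a simple cycle that is not a rotation of `w` falls short by at least `U/|Ω|`. -/
theorem stmt3 {Ω : Type*} [Fintype Ω] [Nonempty Ω] [DecidableEq Ω]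
    (n : ℕ) (hn : 0 < n) (w : Fin n → Ω) (hw : Function.Injective w)
    (U : ℝ) (hU : 0 < U) (f : Ω × Ω → ℝ)
    (hfdef : ∀ a b, f (a, b) =
      if ∃ i : Fin n, a = w i ∧ b = w ⟨((i : ℕ) + 1) % n, Nat.mod_lt _ hn⟩ then U else 0) :
    cesaro f (periodicExt hn w) = U ∧
    ∀ (P : ℕ) (hP : 0 < P) (u : Fin P → Ω), Function.Injective u →
      ¬ IsRotationOf hn u w →
      cesaro f (periodicExt hn w) - cesaro f (periodicExt hP u) ≥ U / Fintype.card Ω := by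
  set π := periodicExt hn w with hπdef
  have hterm : ∀ i : ℕ, f (π i, π (i + 1)) = U := by
    intro i
    rw [hfdef, if_pos]
    refine ⟨⟨i % n, Nat.mod_lt _ hn⟩, rfl, ?_⟩
    show w ⟨(i + 1) % n, _⟩ = w ⟨(i % n + 1) % n, _⟩
    congr 1
    ext
    show (i + 1) % n = (i % n + 1) % n
    exact (Nat.mod_add_mod i n 1).symm
  have h1 : cesaro f π = U := by
    have hev : (fun N : ℕ => (1 / (N : ℝ)) * ∑ i ∈ Finset.range N, f (π i, π (i + 1)))
        =ᶠ[atTop] (fun _ => U) := by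
      filter_upwards [eventually_ge_atTop 1] with N hN
      have hNpos : (0 : ℝ) < N := by exact_mod_cast hN
      rw [Finset.sum_congr rfl fun i _ => hterm i, Finset.sum_const, Finset.card_range,
        nsmul_eq_mul]
      field_simp
    unfold cesaro
    rw [Filter.limsup_congr hev, Filter.limsup_const]
  refine ⟨h1, ?_⟩
  intro P hP u hu hrot
  set ρ := periodicExt hP u with hρdef
  set g : ℕ → ℝ := fun i => f (ρ i, ρ (i + 1)) with hgdef
  have hρper : ∀ i, ρ (i + P) = ρ i := by
    intro i
    show u ⟨(i + P) % P, _⟩ = u ⟨i % P, _⟩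
    congr 1
    ext
    exact Nat.add_mod_right i P
  have hgper : ∀ i, g (i + P) = g i := by
    intro i
    show f (ρ (i + P), ρ (i + P + 1)) = f (ρ i, ρ (i + 1))
    rw [show i + P + 1 = i + 1 + P by ring, hρper, hρper]
  have hgcases : ∀ i, g i = 0 ∨ g i = U := by
    intro i
    show f (ρ i, ρ (i + 1)) = 0 ∨ f (ρ i, ρ (i + 1)) = U
    rw [hfdef]
    split <;> simp
  have hg0 : ∀ i, 0 ≤ g i := by
    intro i
    rcases hgcases i with h | h <;> simp [h, hU.le]
  have hgU : ∀ i, g i ≤ U := by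
    intro i
    rcases hgcases i with h | h <;> simp [h, hU.le]
  set S : ℝ := ∑ i ∈ Finset.range P, g i with hSdef
  have hS0 : 0 ≤ S := Finset.sum_nonneg fun i _ => hg0 i
  -- key combinatorial fact : some step of u is not an edge of w
  have hkey : ∃ i0, i0 < P ∧ g i0 = 0 := by
    by_contra hcon
    push_neg at hcon
    have hedge : ∀ i, i < P → ∃ j : Fin n, ρ i = w j ∧
        ρ (i + 1) = w ⟨((j : ℕ) + 1) % n, Nat.mod_lt _ hn⟩ := by
      intro i hi
      have hne := hcon i hi
      have : f (ρ i, ρ (i + 1)) ≠ 0 := hne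
      rw [hfdef] at this
      by_contra hc
      rw [if_neg hc] at this
      exact this rfl
    obtain ⟨j0, hj0, -⟩ := hedge 0 hP
    have hclaim : ∀ k, k < P → ρ k = w ⟨((j0 : ℕ) + k) % n, Nat.mod_lt _ hn⟩ := by
      intro k
      induction k with
      | zero =>
        intro _
        rw [hj0]
        congr 1
        ext
        simp [Nat.mod_eq_of_lt j0.isLt]
      | succ k ih =>
        intro hk1
        have hk : k < P := Nat.lt_of_succ_lt hk1
        obtain ⟨j, hja, hjb⟩ := hedge k hk
        have hjeq : j = ⟨((j0 : ℕ) + k) % n, Nat.mod_lt _ hn⟩ := hw (by rw [← hja, ih hk])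
        rw [hjb, hjeq]
        congr 1
        ext
        show (((j0 : ℕ) + k) % n + 1) % n = ((j0 : ℕ) + (k + 1)) % n
        have harr : (j0 : ℕ) + (k + 1) = ((j0 : ℕ) + k) + 1 := by ring
        rw [harr]
        exact Nat.mod_add_mod _ _ _
    have hPn : P ≤ n := by
      by_contra hc
      push_neg at hc
      have h1 : ρ n = ρ 0 := by
        rw [hclaim n hc, hclaim 0 hP]
        congr 1
        ext
        show ((j0 : ℕ) + n) % n = ((j0 : ℕ) + 0) % n
        simp [Nat.add_mod_right]
      have h2 : (⟨n % P, Nat.mod_lt _ hP⟩ : Fin P) = ⟨0 % P, Nat.mod_lt _ hP⟩ := hu h1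
      have h3 : n % P = 0 % P := congrArg Fin.val h2
      rw [Nat.mod_eq_of_lt hc, Nat.zero_mod] at h3
      omega
    have hwrapdvd : n ∣ P := by
      obtain ⟨j, hja, hjb⟩ := hedge (P - 1) (Nat.sub_lt hP one_pos)
      have hjeq : j = ⟨((j0 : ℕ) + (P - 1)) % n, Nat.mod_lt _ hn⟩ :=
        hw (by rw [← hja, hclaim (P - 1) (Nat.sub_lt hP one_pos)])
      rw [show P - 1 + 1 = P from by omega] at hjb
      have hρP : ρ P = ρ 0 := by
        show u ⟨P % P, _⟩ = u ⟨0 % P, _⟩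
        congr 1
        ext
        simp
      have hweq : w j0 = w ⟨((j0 : ℕ) + P) % n, Nat.mod_lt _ hn⟩ := by
        rw [← hj0, ← hρP, hjb, hjeq]
        congr 1
        ext
        show (((j0 : ℕ) + (P - 1)) % n + 1) % n = ((j0 : ℕ) + P) % n
        rw [Nat.mod_add_mod]
        congr 1
        omega
      have h3 : (j0 : ℕ) = ((j0 : ℕ) + P) % n := congrArg Fin.val (hw hweq)
      have hmod : Nat.ModEq n (j0 : ℕ) ((j0 : ℕ) + P) := by
        show (j0 : ℕ) % n = ((j0 : ℕ) + P) % n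
        rw [Nat.mod_eq_of_lt j0.isLt]
        exact h3
      have := (Nat.modEq_iff_dvd' (Nat.le_add_right _ _)).mp hmod
      simpa using this
    have hPeqn : P = n := Nat.le_antisymm hPn (Nat.le_of_dvd hP hwrapdvd)
    apply hrot
    refine ⟨hPeqn, (j0 : ℕ), ?_⟩
    intro i
    have hi := hclaim (i : ℕ) i.isLt
    have hui : u i = ρ (i : ℕ) := by
      show u i = u ⟨(i : ℕ) % P, _⟩
      congr 1
      ext
      exact (Nat.mod_eq_of_lt i.isLt).symm
    rw [hui, hi]
    congr 1
    ext
    show ((j0 : ℕ) + (i : ℕ)) % n = ((i : ℕ) + (j0 : ℕ)) % n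
    rw [Nat.add_comm]
  obtain ⟨i0, hi0P, hgi0⟩ := hkey
  have hS_le : S ≤ ((P - 1 : ℕ) : ℝ) * U := by
    have h2 : S = ∑ i ∈ (Finset.range P).erase i0, g i := by
      rw [hSdef, ← Finset.sum_erase_add _ _ (Finset.mem_range.mpr hi0P), hgi0, add_zero]
    rw [h2]
    calc ∑ i ∈ (Finset.range P).erase i0, g i
        ≤ ((Finset.range P).erase i0).card • U :=
          Finset.sum_le_card_nsmul _ _ U fun x _ => hgU x
      _ = ((P - 1 : ℕ) : ℝ) * U := by
          rw [Finset.card_erase_of_mem (Finset.mem_range.mpr hi0P), Finset.card_range,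
            nsmul_eq_mul]
  have hPposR : (0 : ℝ) < P := by exact_mod_cast hP
  -- upper bound for the Cesàro averages
  have havg : ∀ N : ℕ, (1 / (N : ℝ)) * ∑ i ∈ Finset.range N, g i
      ≤ (P : ℝ) * U * (1 / N) + S / P := by
    intro N
    rcases Nat.eq_zero_or_pos N with h | h
    · subst h
      simp only [Nat.cast_zero, div_zero, one_div, inv_zero, zero_mul, mul_zero, zero_add]
      positivity
    have hNpos : (0 : ℝ) < N := by exact_mod_cast h
    have hdecomp : ∑ i ∈ Finset.range N, g i
        = ((N / P : ℕ) : ℝ) * S + ∑ i ∈ Finset.range (N % P), g i := by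
      have hNsplit : N = N / P * P + N % P := by
        rw [Nat.mul_comm]
        exact (Nat.div_add_mod N P).symm
      conv_lhs => rw [hNsplit]
      exact periodic_sum_aux g P hgper (N % P) (N / P)
    have hpart : ∑ i ∈ Finset.range (N % P), g i ≤ (P : ℝ) * U := by
      calc ∑ i ∈ Finset.range (N % P), g i
          ≤ (Finset.range (N % P)).card • U := Finset.sum_le_card_nsmul _ _ U fun x _ => hgU x
        _ = ((N % P : ℕ) : ℝ) * U := by rw [Finset.card_range, nsmul_eq_mul]
        _ ≤ (P : ℝ) * U := by
            apply mul_le_mul_of_nonneg_right _ hU.le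
            exact_mod_cast (Nat.mod_lt N hP).le
    have hfloor : ((N / P : ℕ) : ℝ) ≤ (N : ℝ) / P := Nat.cast_div_le
    have hstep : ∑ i ∈ Finset.range N, g i ≤ (N : ℝ) / P * S + (P : ℝ) * U := by
      rw [hdecomp]
      exact add_le_add (mul_le_mul_of_nonneg_right hfloor hS0) hpart
    calc (1 / (N : ℝ)) * ∑ i ∈ Finset.range N, g i
        ≤ (1 / (N : ℝ)) * ((N : ℝ) / P * S + (P : ℝ) * U) := by
          apply mul_le_mul_of_nonneg_left hstep
          positivity
      _ = (P : ℝ) * U * (1 / N) + S / P := by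
          field_simp
          ring
  have hb_tendsto : Tendsto (fun N : ℕ => (P : ℝ) * U * (1 / N) + S / P) atTop
      (nhds ((P : ℝ) * U * 0 + S / P)) :=
    (tendsto_one_div_atTop_nhds_zero_nat.const_mul _).add_const _
  have hub : cesaro f ρ ≤ S / P := by
    have hle : cesaro f ρ ≤ limsup (fun N : ℕ => (P : ℝ) * U * (1 / N) + S / P) atTop := by
      refine Filter.limsup_le_limsup (Filter.Eventually.of_forall havg) ?_ ?_
      · apply Filter.IsBoundedUnder.isCoboundedUnder_le
        refine isBoundedUnder_of ⟨0, fun N => ?_⟩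
        have : (0 : ℝ) ≤ ∑ i ∈ Finset.range N, g i := Finset.sum_nonneg fun i _ => hg0 i
        positivity
      · exact hb_tendsto.isBoundedUnder_le
    rwa [hb_tendsto.limsup_eq, mul_zero, zero_add] at hle
  -- final arithmetic
  have hPcard : (P : ℝ) ≤ (Fintype.card Ω : ℝ) := by
    have := Fintype.card_le_of_injective u hu
    rw [Fintype.card_fin] at this
    exact_mod_cast this
  have hcardpos : (0 : ℝ) < (Fintype.card Ω : ℝ) := lt_of_lt_of_le hPposR hPcard
  have hcast : ((P - 1 : ℕ) : ℝ) = (P : ℝ) - 1 := by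
    have : (1 : ℕ) ≤ P := hP
    push_cast [Nat.cast_sub this]
    ring
  have hub2 : cesaro f ρ ≤ U - U / P := by
    have h2 : S / P ≤ ((P : ℝ) - 1) * U / P := by
      rw [← hcast]
      exact (div_le_div_iff_of_pos_right hPposR).mpr hS_le
    have h3 : ((P : ℝ) - 1) * U / P = U - U / P := by
      field_simp
    linarith
  have hdiv : U / (Fintype.card Ω : ℝ) ≤ U / P := by
    apply div_le_div_of_nonneg_left hU.le hPposR hPcard
  rw [ge_iff_le, h1]
  linarith
end

section
/- Let Ω be finite, f : Ω × Ω → ℝ≥0, r > 0, and define the discounted revenue of an infinite sequence π = (w_0, w_1, ...) by R(π) = ∑_{n=0}^∞ e^{−r n} f(w_n, w_{n+1}). Then there exists an eventually-periodic sequence π* = (W_0, W_1, W_1, W_1, ...), where W_0 and W_1 are finite strings whose combined entries are pairwise distinct (so total length ≤ |Ω|), such that R(π*) = sup_π R(π). In particular the supremum is attained by a pre-cyclic policy. -/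
open Finset

/-- Discounted revenue `R(π) = ∑_{n≥0} e^{-rn} f(π_n, π_{n+1})`. -/
noncomputable def discRev {Ω : Type*} (f : Ω × Ω → ℝ) (r : ℝ) (π : ℕ → Ω) : ℝ :=
  ∑' n : ℕ, Real.exp (-r * n) * f (π n, π (n + 1))

/-- The pre-cyclic (eventually periodic) sequence: the finite string `W0` followed by
infinite repetition of `W1`. -/
def preCyclic {Ω : Type*} {k P : ℕ} (hP : 0 < P) (W0 : Fin k → Ω) (W1 : Fin P → Ω) :
    ℕ → Ω :=
  fun n => if h : n < k then W0 ⟨n, h⟩ else W1 ⟨(n - k) % P, Nat.mod_lt _ hP⟩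

section Aux
set_option linter.unusedSectionVars false

variable {Ω : Type*} [Fintype Ω] [Nonempty Ω] (f : Ω × Ω → ℝ) (r : ℝ)

private lemma exp_pow' (n : ℕ) : Real.exp (-r * n) = Real.exp (-r) ^ n := by
  rw [mul_comm, Real.exp_nat_mul]

private lemma aux_summable (hf : ∀ p, 0 ≤ f p) (hr : 0 < r) (π : ℕ → Ω) :
    Summable (fun n : ℕ => Real.exp (-r * n) * f (π n, π (n + 1))) := by
  obtain ⟨pm, hpm⟩ := Finite.exists_max f
  apply Summable.of_nonneg_of_le
    (fun n => mul_nonneg (Real.exp_nonneg _) (hf _))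
    (fun n => ?_)
    (((summable_geometric_of_lt_one (Real.exp_nonneg _)
      (Real.exp_lt_one_iff.2 (neg_neg_iff_pos.2 hr))).mul_right (f pm)))
  rw [exp_pow']
  exact mul_le_mul_of_nonneg_left (hpm _) (pow_nonneg (Real.exp_nonneg _) n)

private lemma discRev_nonneg (hf : ∀ p, 0 ≤ f p) (π : ℕ → Ω) : 0 ≤ discRev f r π :=
  tsum_nonneg fun n => mul_nonneg (Real.exp_nonneg _) (hf _)

/-- uniform bound -/
private lemma discRev_le (hf : ∀ p, 0 ≤ f p) (hr : 0 < r) (π : ℕ → Ω) :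
    discRev f r π ≤ (1 - Real.exp (-r))⁻¹ * f (Classical.choose (Finite.exists_max f)) := by
  have hpm := Classical.choose_spec (Finite.exists_max f)
  set pm := Classical.choose (Finite.exists_max f)
  have hq : Real.exp (-r) < 1 := Real.exp_lt_one_iff.2 (neg_neg_iff_pos.2 hr)
  have hsum : Summable (fun n : ℕ => Real.exp (-r) ^ n * f pm) :=
    (summable_geometric_of_lt_one (Real.exp_nonneg _) hq).mul_right _
  calc discRev f r π ≤ ∑' n : ℕ, Real.exp (-r) ^ n * f pm := by
        apply Summable.tsum_le_tsum _ (aux_summable f r hf hr π) hsum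
        intro n
        rw [exp_pow']
        exact mul_le_mul_of_nonneg_left (hpm _) (pow_nonneg (Real.exp_nonneg _) n)
    _ = (1 - Real.exp (-r))⁻¹ * f pm := by
        rw [tsum_mul_right, tsum_geometric_of_lt_one (Real.exp_nonneg _) hq]

/-- shift formula -/
private lemma discRev_shift (hf : ∀ p, 0 ≤ f p) (hr : 0 < r) (π : ℕ → Ω) :
    discRev f r π = f (π 0, π 1) + Real.exp (-r) * discRev f r (fun n => π (n + 1)) := by
  have hs := aux_summable f r hf hr π
  rw [discRev, Summable.tsum_eq_zero_add hs]
  congr 1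
  · norm_num
  · rw [discRev, ← tsum_mul_left]
    congr 1
    ext n
    rw [← mul_assoc, ← Real.exp_add]
    congr 2
    push_cast
    ring

/-- value function -/
private noncomputable def val' (ω : Ω) : ℝ :=
  ⨆ π : {p : ℕ → Ω // p 0 = ω}, discRev f r π.val

/-- cons sequence -/
private def cons' (ω : Ω) (π : ℕ → Ω) : ℕ → Ω := fun n => Nat.rec ω (fun m _ => π m) n

private lemma cons'_zero (ω : Ω) (π : ℕ → Ω) : cons' ω π 0 = ω := rfl

variable (hf : ∀ p, 0 ≤ f p) (hr : 0 < r)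
include hf hr

private lemma bdd (ω : Ω) :
    BddAbove (Set.range fun π : {p : ℕ → Ω // p 0 = ω} => discRev f r π.val) := by
  refine ⟨(1 - Real.exp (-r))⁻¹ * f (Classical.choose (Finite.exists_max f)), ?_⟩
  rintro x ⟨π, rfl⟩
  exact discRev_le f r hf hr π.val

private lemma le_val (π : ℕ → Ω) : discRev f r π ≤ val' f r (π 0) :=
  le_ciSup (bdd f r hf hr (π 0)) (⟨π, rfl⟩ : {p : ℕ → Ω // p 0 = π 0})

private lemma val_le {ω : Ω} {c : ℝ} (h : ∀ π : ℕ → Ω, π 0 = ω → discRev f r π ≤ c) :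
    val' f r ω ≤ c := by
  have : Nonempty {p : ℕ → Ω // p 0 = ω} := ⟨⟨fun _ => ω, rfl⟩⟩
  exact ciSup_le fun π => h π.val π.2

private lemma val_nonneg (ω : Ω) : 0 ≤ val' f r ω :=
  le_trans (discRev_nonneg f r hf (fun _ => ω)) (le_val f r hf hr (fun _ => ω))

private lemma val_le_bound (ω : Ω) :
    val' f r ω ≤ (1 - Real.exp (-r))⁻¹ * f (Classical.choose (Finite.exists_max f)) :=
  val_le f r hf hr fun π _ => discRev_le f r hf hr π

private lemma bellman_ge (ω ω' : Ω) : f (ω, ω') + Real.exp (-r) * val' f r ω' ≤ val' f r ω := by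
  have hq : (0:ℝ) < Real.exp (-r) := Real.exp_pos _
  rw [← sub_nonneg]
  have key : val' f r ω' ≤ (val' f r ω - f (ω, ω')) / Real.exp (-r) := by
    apply val_le f r hf hr
    intro π hπ0
    rw [le_div_iff₀ hq, mul_comm]
    have h1 : discRev f r (cons' ω π) = f (ω, π 0) + Real.exp (-r) * discRev f r π := by
      rw [discRev_shift f r hf hr]
      rfl
    have h2 := le_val f r hf hr (cons' ω π)
    rw [h1, cons'_zero, hπ0] at h2
    linarith
  rw [le_div_iff₀ hq] at key
  linarith

private lemma bellman_le (ω : Ω) :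
    ∃ ω' : Ω, val' f r ω = f (ω, ω') + Real.exp (-r) * val' f r ω' := by
  obtain ⟨ω', hω'⟩ := Finite.exists_max (fun y : Ω => f (ω, y) + Real.exp (-r) * val' f r y)
  refine ⟨ω', le_antisymm ?_ (bellman_ge f r hf hr ω ω')⟩
  apply val_le f r hf hr
  intro π hπ0
  rw [discRev_shift f r hf hr]
  calc f (π 0, π 1) + Real.exp (-r) * discRev f r (fun n => π (n+1))
      ≤ f (π 0, π 1) + Real.exp (-r) * val' f r (π 1) := by
        have := le_val f r hf hr (fun n => π (n + 1))
        have h := mul_le_mul_of_nonneg_left this (Real.exp_nonneg (-r))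
        linarith
    _ ≤ f (ω, ω') + Real.exp (-r) * val' f r ω' := by rw [hπ0]; exact hω' (π 1)

/-- The sup is achieved by the orbit of a greedy policy. -/
private theorem orbit_achieves :
    ∃ (g : Ω → Ω) (ωs : Ω),
      discRev f r (fun n => g^[n] ωs) = ⨆ π : ℕ → Ω, discRev f r π := by
  classical
  choose g hg using bellman_le f r hf hr
  obtain ⟨ωs, hωs⟩ := Finite.exists_max (val' f r)
  refine ⟨g, ωs, ?_⟩
  set orb : ℕ → Ω := fun n => g^[n] ωs with horb
  have horbsucc : ∀ n, orb (n + 1) = g (orb n) := fun n => Function.iterate_succ_apply' g n ωs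
  have htel : ∀ N : ℕ, val' f r ωs =
      (∑ n ∈ range N, Real.exp (-r * n) * f (orb n, orb (n + 1)))
        + Real.exp (-r * N) * val' f r (orb N) := by
    intro N
    induction N with
    | zero => simp [orb]
    | succ N ih =>
      rw [ih, sum_range_succ, hg (orb N), ← horbsucc N]
      have : Real.exp (-r * (N + 1 : ℕ)) = Real.exp (-r * N) * Real.exp (-r) := by
        rw [← Real.exp_add]; push_cast; ring
      rw [this]
      ring
  set B := (1 - Real.exp (-r))⁻¹ * f (Classical.choose (Finite.exists_max f)) with hB
  have hq0 : (0:ℝ) ≤ Real.exp (-r) := Real.exp_nonneg _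
  have hq1 : Real.exp (-r) < 1 := Real.exp_lt_one_iff.2 (neg_neg_iff_pos.2 hr)
  have hlim1 : Filter.Tendsto
      (fun N => ∑ n ∈ range N, Real.exp (-r * n) * f (orb n, orb (n + 1)))
      Filter.atTop (nhds (discRev f r orb)) :=
    (aux_summable f r hf hr orb).hasSum.tendsto_sum_nat
  have hlim2 : Filter.Tendsto (fun N : ℕ => Real.exp (-r * N) * val' f r (orb N))
      Filter.atTop (nhds 0) := by
    have hgeo : Filter.Tendsto (fun N : ℕ => Real.exp (-r) ^ N * B) Filter.atTop (nhds 0) := by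
      have := (tendsto_pow_atTop_nhds_zero_of_lt_one hq0 hq1).mul_const B
      simpa using this
    apply squeeze_zero (fun N => mul_nonneg (Real.exp_nonneg _) (val_nonneg f r hf hr _))
      (fun N => ?_) hgeo
    rw [mul_comm (-r) (N:ℝ), Real.exp_nat_mul]
    exact mul_le_mul_of_nonneg_left (val_le_bound f r hf hr _) (pow_nonneg hq0 N)
  have hval_eq : val' f r ωs = discRev f r orb := by
    have h1 : Filter.Tendsto (fun _ : ℕ => val' f r ωs) Filter.atTop
        (nhds (discRev f r orb + 0)) :=
      (hlim1.add hlim2).congr (fun N => (htel N).symm)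
    have := tendsto_nhds_unique h1 tendsto_const_nhds
    rw [← this, add_zero]
  have hbdd : BddAbove (Set.range fun π : ℕ → Ω => discRev f r π) := by
    refine ⟨B, ?_⟩
    rintro x ⟨π, rfl⟩
    exact discRev_le f r hf hr π
  refine le_antisymm (le_ciSup hbdd orb) (ciSup_le fun π => ?_)
  calc discRev f r π ≤ val' f r (π 0) := le_val f r hf hr π
    _ ≤ val' f r ωs := hωs (π 0)
    _ = discRev f r orb := hval_eq

end Aux

section Orb
variable {Ω : Type*} [Fintype Ω] (g : Ω → Ω) (ω : Ω)

/-- Any orbit of a map on a finite set is pre-cyclic with all pre-cycle and cycle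
entries distinct. -/
private theorem orbit_structure :
    ∃ (k P : ℕ) (hP : 0 < P) (W0 : Fin k → Ω) (W1 : Fin P → Ω),
      Function.Injective (Fin.append W0 W1) ∧ k + P ≤ Fintype.card Ω ∧
      preCyclic hP W0 W1 = fun n => g^[n] ω := by
  classical
  set orb : ℕ → Ω := fun n => g^[n] ω with horb
  have hQ : ∃ j, ∃ i < j, orb i = orb j := by
    have : ¬ Function.Injective (fun m : Fin (Fintype.card Ω + 1) => orb m.val) := by
      intro hinj
      have := Fintype.card_le_of_injective _ hinj
      simp at this
    simp only [Function.Injective, not_forall] at this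
    obtain ⟨a, b, hab, hne⟩ := this
    rcases lt_or_gt_of_ne (fun h : a = b => hne h) with h | h
    · exact ⟨b.val, a.val, h, hab⟩
    · exact ⟨a.val, b.val, h, hab.symm⟩
  set j := Nat.find hQ with hj
  obtain ⟨i, hij, hiorb⟩ := Nat.find_spec hQ
  have hinj : ∀ a < j, ∀ b < j, orb a = orb b → a = b := by
    intro a ha b hb hab
    by_contra hne
    rcases lt_or_gt_of_ne hne with h | h
    · exact Nat.find_min hQ hb ⟨a, h, hab⟩
    · exact Nat.find_min hQ ha ⟨b, h, hab.symm⟩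
  set k := i
  set P := j - i with hPdef
  have hP : 0 < P := Nat.sub_pos_of_lt hij
  have hkP : k + P = j := Nat.add_sub_cancel' (le_of_lt hij)
  have hper : ∀ n, k ≤ n → orb (n + P) = orb n := by
    have base : orb (k + P) = orb k := by rw [hkP]; exact hiorb.symm
    intro n hn
    obtain ⟨d, rfl⟩ := Nat.exists_eq_add_of_le hn
    induction d with
    | zero => simpa using base
    | succ d ih =>
      have h1 : k + (d + 1) + P = (k + d + P) + 1 := by ring
      have h2 : k + (d + 1) = (k + d) + 1 := by ring
      rw [h1, h2]
      show g^[(k+d+P)+1] ω = g^[(k+d)+1] ω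
      rw [Function.iterate_succ_apply', Function.iterate_succ_apply']
      exact congrArg g (ih (Nat.le_add_right _ _))
  have hmod : ∀ d, orb (k + d % P) = orb (k + d) := by
    intro d
    induction d using Nat.strong_induction_on with
    | _ d ih =>
      rcases lt_or_ge d P with h | h
      · rw [Nat.mod_eq_of_lt h]
      · have hd : d - P < d := Nat.sub_lt (lt_of_lt_of_le hP h) hP
        have : k + d = (k + (d - P)) + P := by omega
        rw [this, hper _ (Nat.le_add_right _ _), ← ih _ hd, Nat.mod_eq_sub_mod h]
  refine ⟨k, P, hP, fun m => orb m.val, fun m => orb (k + m.val), ?_, ?_, ?_⟩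
  · intro a b hab
    have happ : ∀ m : Fin (k + P), Fin.append (fun m : Fin k => orb m.val)
        (fun m : Fin P => orb (k + m.val)) m = orb m.val := by
      refine Fin.addCases (fun a => ?_) (fun b => ?_)
      · rw [Fin.append_left]
        simp
      · rw [Fin.append_right]
        simp
    rw [happ, happ] at hab
    have ha : a.val < j := by omega
    have hb : b.val < j := by omega
    exact Fin.ext (hinj _ ha _ hb hab)
  · have hinj2 : Function.Injective (fun m : Fin j => orb m.val) := by
      intro a b hab
      exact Fin.ext (hinj _ a.isLt _ b.isLt hab)
    have := Fintype.card_le_of_injective _ hinj2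
    simpa [hkP] using this
  · funext n
    rw [preCyclic]
    rcases lt_or_ge n k with h | h
    · simp [h]
    · have h2 : ¬ (n < k) := not_lt.2 h
      simp only [h2, dif_neg]
      show orb (k + (n - k) % P) = orb n
      rw [hmod]
      congr 1
      omega

end Orb

/-- The supremum of the discounted revenue is attained by a pre-cyclic sequence
`(W0, W1, W1, ...)` whose combined entries are pairwise distinct (so of total length at
most `|Ω|`). -/
theorem stmt12 {Ω : Type*} [Fintype Ω] [Nonempty Ω] (f : Ω × Ω → ℝ) (hf : ∀ p, 0 ≤ f p)
    (r : ℝ) (hr : 0 < r) :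
    ∃ (k P : ℕ) (hP : 0 < P) (W0 : Fin k → Ω) (W1 : Fin P → Ω),
      Function.Injective (Fin.append W0 W1) ∧ k + P ≤ Fintype.card Ω ∧
      discRev f r (preCyclic hP W0 W1) = ⨆ π : ℕ → Ω, discRev f r π := by
  obtain ⟨g, ωs, hach⟩ := orbit_achieves f r hf hr
  obtain ⟨k, P, hP, W0, W1, hinj, hcard, heq⟩ := orbit_structure g ωs
  exact ⟨k, P, hP, W0, W1, hinj, hcard, by rw [heq]; exact hach⟩
end

section
/- In Example 2 of the paper (K ≥ 5, ε = 1/(200K), γ_i = (1−ε)ε^{−K+i}, ...): suppose the pairwise transition revenues satisfy (i,i+1) = U for all i ∈ [1,K−1], (i,i+ℓ) = 0 for ℓ ≥ 2, (K,2) = (11/10)U, and (i,j) ≤ (1 + 1/(100K))U for every other pair. Then the cyclic policy π̄ = (2,3,...,K) has average revenue α + U + U/(10(K−1)), and every other simple cyclic policy π satisfies R(π) ≤ R(π̄) − U/(20(K−1)). In particular the optimal policy is increasing with cycle length K−1. -/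
open Finset


lemma modCancel {J : ℕ} (i0 a b : ℕ) (ha : a < J) (hb : b < J)
    (h : (i0 + a) % J = (i0 + b) % J) : a = b := by
  have h2 : a % J = b % J := Nat.ModEq.add_left_cancel' i0 h
  rwa [Nat.mod_eq_of_lt ha, Nat.mod_eq_of_lt hb] at h2

lemma keyStruct (K J : ℕ) (hK : 5 ≤ K) (hJ : 0 < J) (hJK : J ≤ K)
    (w : Fin J → ℕ) (hinj : Function.Injective w)
    (hwK : ∀ i, 1 ≤ w i ∧ w i ≤ K)
    (i0 : Fin J) (h0 : w i0 = K)
    (h0' : w ⟨((i0 : ℕ) + 1) % J, Nat.mod_lt _ hJ⟩ = 2)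
    (hstep : ∀ i : Fin J, w ⟨((i : ℕ) + 1) % J, Nat.mod_lt _ hJ⟩ ≤ w i + 1) :
    J = K - 1 ∧ ∀ t, 1 ≤ t → t ≤ J - 1 →
      w ⟨((i0 : ℕ) + t) % J, Nat.mod_lt _ hJ⟩ = t + 1 := by
  set idx : ℕ → Fin J := fun t => ⟨((i0 : ℕ) + t) % J, Nat.mod_lt _ hJ⟩ with hidx
  have hJ2 : 2 ≤ J := by
    by_contra h
    have hJ1 : J = 1 := by omega
    subst hJ1
    have : (⟨((i0 : ℕ) + 1) % 1, Nat.mod_lt _ hJ⟩ : Fin 1) = i0 := by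
      apply Fin.ext; simp
    rw [this, h0] at h0'; omega
  have hidx_succ : ∀ t : ℕ,
      (⟨((idx t : ℕ) + 1) % J, Nat.mod_lt _ hJ⟩ : Fin J) = idx (t + 1) := by
    intro t
    apply Fin.ext
    show (((i0 : ℕ) + t) % J + 1) % J = ((i0 : ℕ) + (t + 1)) % J
    rw [Nat.mod_add_mod, Nat.add_assoc]
  have hidx_inj : ∀ a b : ℕ, a < J → b < J → idx a = idx b → a = b := by
    intro a b ha hb h
    exact modCancel (i0 : ℕ) a b ha hb (congrArg Fin.val h)
  have hidx0 : idx 0 = i0 := by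
    apply Fin.ext
    show ((i0 : ℕ) + 0) % J = (i0 : ℕ)
    rw [Nat.add_zero, Nat.mod_eq_of_lt i0.isLt]
  have hidx1 : w (idx 1) = 2 := h0'
  have key : ∀ t, 1 ≤ t → t ≤ J - 1 → w (idx t) = t + 1 := by
    intro t
    induction t using Nat.strong_induction_on with
    | _ t IH =>
      intro ht1 htJ
      rcases Nat.eq_or_lt_of_le ht1 with h1 | h2
      · rw [← h1]; exact hidx1
      · -- t ≥ 2
        have ht2 : 2 ≤ t := h2
        have hprev : w (idx (t - 1)) = t := by
          have := IH (t - 1) (by omega) (by omega) (by omega)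
          omega
        have hvle : w (idx t) ≤ t + 1 := by
          have hh := hstep (idx (t - 1))
          rw [hidx_succ (t - 1), show t - 1 + 1 = t by omega] at hh
          omega
        have hvK : idx t ≠ i0 := by
          rw [← hidx0]; intro h
          have := hidx_inj t 0 (by omega) (by omega) h; omega
        have hnotmid : ∀ s, 1 ≤ s → s < t → w (idx t) ≠ s + 1 := by
          intro s hs1 hst h
          have hws : w (idx s) = s + 1 := IH s (by omega) hs1 (by omega)
          have : idx t = idx s := hinj (by rw [h, hws])
          have := hidx_inj t s (by omega) (by omega) this; omega
        by_cases hvt : w (idx t) = t + 1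
        · exact hvt
        exfalso
        have hv_one : w (idx t) = 1 := by
          by_contra hne
          have hge : 1 ≤ w (idx t) := (hwK (idx t)).1
          exact hnotmid (w (idx t) - 1) (by omega) (by omega) (by omega)
        have hsucc := hstep (idx t)
        rw [hidx_succ t, hv_one] at hsucc
        by_cases hlast : t = J - 1
        · have heq : idx (t + 1) = i0 := by
            rw [← hidx0]; apply Fin.ext
            show ((i0 : ℕ) + (t + 1)) % J = ((i0 : ℕ) + 0) % J
            rw [show t + 1 = J by omega, Nat.add_mod_right, Nat.add_zero]
          rw [heq, h0] at hsucc; omega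
        · have hne1 : w (idx (t + 1)) ≠ 2 := by
            intro h
            have := hinj (h.trans hidx1.symm)
            have := hidx_inj (t + 1) 1 (by omega) (by omega) this; omega
          have hne2 : w (idx (t + 1)) ≠ 1 := by
            intro h
            have := hinj (h.trans hv_one.symm)
            have := hidx_inj (t + 1) t (by omega) (by omega) this; omega
          have := (hwK (idx (t + 1))).1
          omega
  have hlastv : w (idx (J - 1)) = J := by
    have := key (J - 1) (by omega) le_rfl; omega
  have hcycle : idx J = i0 := by
    rw [← hidx0]; apply Fin.ext
    show ((i0 : ℕ) + J) % J = ((i0 : ℕ) + 0) % J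
    rw [Nat.add_mod_right, Nat.add_zero]
  have hKJ : K ≤ J + 1 := by
    have hh := hstep (idx (J - 1))
    rw [hidx_succ (J - 1), show J - 1 + 1 = J by omega, hcycle, h0, hlastv] at hh
    omega
  have hJne : J ≠ K := by
    intro h
    have hK1 : w (idx (K - 1)) = K := by
      have := key (K - 1) (by omega) (by omega); omega
    have : idx (K - 1) = i0 := hinj (hK1.trans h0.symm)
    have := hidx_inj (K - 1) 0 (by omega) (by omega) (this.trans hidx0.symm)
    omega
  exact ⟨by omega, key⟩

/-- Example 2 of the paper, abstractly: if the pair revenues `g` satisfy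
`g(i,i+1) = U`, `g(i,i+ℓ) = 0` for `ℓ ≥ 2`, `g(K,2) = (11/10)U`, and
`g(i,j) ≤ (1 + 1/(100K))U` for every other pair, then the increasing cycle
`π̄ = (2,3,…,K)` of length `K-1` has average revenue `α + U + U/(10(K-1))` and every
other simple cycle falls short by at least `U/(20(K-1))`. -/
theorem stmt18 (K : ℕ) (hK : 5 ≤ K) (α U : ℝ) (hα : 0 < α) (hU : 0 < U)
    (g : ℕ → ℕ → ℝ) (hg0 : ∀ i j, 0 ≤ g i j)
    (h1 : ∀ i, 1 ≤ i → i ≤ K - 1 → g i (i + 1) = U)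
    (h2 : ∀ i ℓ, 1 ≤ i → 2 ≤ ℓ → i + ℓ ≤ K → g i (i + ℓ) = 0)
    (h3 : g K 2 = 11 / 10 * U)
    (h4 : ∀ i j, 1 ≤ i → i ≤ K → 1 ≤ j → j ≤ K → (i, j) ≠ (K, 2) →
      g i j ≤ (1 + 1 / (100 * (K : ℝ))) * U) :
    (α + (1 / ((K : ℝ) - 1)) * ∑ i : Fin (K - 1),
        g ((i : ℕ) + 2) ((((i : ℕ) + 1) % (K - 1)) + 2)
      = α + U + U / (10 * ((K : ℝ) - 1))) ∧
    (∀ (J : ℕ) (hJ : 0 < J) (w : Fin J → ℕ), Function.Injective w →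
      (∀ i, 1 ≤ w i ∧ w i ≤ K) →
      ¬ IsRotationOf (n := K - 1) (by omega) w (fun i : Fin (K - 1) => (i : ℕ) + 2) →
      α + (1 / (J : ℝ)) * ∑ i : Fin J, g (w i) (w ⟨((i : ℕ) + 1) % J, Nat.mod_lt _ hJ⟩)
        ≤ α + U + U / (10 * ((K : ℝ) - 1)) - U / (20 * ((K : ℝ) - 1))) := by
  constructor
  · -- Part 1: value of the increasing cycle
    have hsum1 : ∑ i : Fin (K - 1), g ((i : ℕ) + 2) ((((i : ℕ) + 1) % (K - 1)) + 2)
        = (K - 2 : ℕ) * U + 11 / 10 * U := by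
      rw [Fin.sum_univ_eq_sum_range (fun i => g (i + 2) (((i + 1) % (K - 1)) + 2))]
      rw [show K - 1 = (K - 2) + 1 by omega, Finset.sum_range_succ]
      have hmain : ∀ x ∈ Finset.range (K - 2),
          g (x + 2) ((x + 1) % ((K - 2) + 1) + 2) = U := by
        intro x hx
        rw [Finset.mem_range] at hx
        rw [Nat.mod_eq_of_lt (by omega)]
        exact h1 (x + 2) (by omega) (by omega)
      rw [Finset.sum_congr rfl hmain, Finset.sum_const, Finset.card_range,
        show (K - 2 + 1) % (K - 2 + 1) = 0 from Nat.mod_self _,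
        show K - 2 + 2 = K by omega, h3, nsmul_eq_mul]
    rw [hsum1]
    have hKpos : (0 : ℝ) < (K : ℝ) - 1 := by
      have : (5 : ℝ) ≤ (K : ℝ) := by exact_mod_cast hK
      linarith
    have hcast : ((K - 2 : ℕ) : ℝ) = (K : ℝ) - 2 := by
      rw [Nat.cast_sub (by omega)]; norm_num
    rw [hcast]
    field_simp
    ring
  · -- Part 2: every other simple cycle falls short
    intro J hJ w hinj hwK hrot
    have hKpos : (0 : ℝ) < (K : ℝ) - 1 := by
      have : (5 : ℝ) ≤ (K : ℝ) := by exact_mod_cast hK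
      linarith
    have hKR : (0 : ℝ) < (K : ℝ) := by linarith
    set nxt : Fin J → Fin J := fun i => ⟨((i : ℕ) + 1) % J, Nat.mod_lt _ hJ⟩ with hnxt
    set c : ℝ := 1 / (100 * (K : ℝ)) with hc
    have hc0 : 0 ≤ c := by positivity
    set D : ℝ := U / (20 * ((K : ℝ) - 1)) with hD
    have hD0 : 0 ≤ D := by positivity
    have hJK : J ≤ K := by
      have hinj2 : Function.Injective
          (fun i : Fin J => (⟨w i - 1, by have := (hwK i).2; have := (hwK i).1; omega⟩ : Fin K)) := by
        intro a b h
        apply hinj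
        have := (hwK a).1; have := (hwK b).1
        have h2 := congrArg Fin.val h
        simp only at h2
        omega
      simpa using Fintype.card_le_of_injective _ hinj2
    have hB : ∀ i, (w i, w (nxt i)) ≠ ((K : ℕ), 2) → g (w i) (w (nxt i)) ≤ (1 + c) * U :=
      fun i h => h4 _ _ (hwK i).1 (hwK i).2 (hwK _).1 (hwK _).2 h
    have hBle : (1 + c) * U ≤ U + D := by
      have h5 : (20 : ℝ) * ((K : ℝ) - 1) ≤ 100 * (K : ℝ) := by linarith
      have h6 : c ≤ 1 / (20 * ((K : ℝ) - 1)) := by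
        rw [hc]
        apply one_div_le_one_div_of_le (by linarith) h5
      have h7 : c * U ≤ 1 / (20 * ((K : ℝ) - 1)) * U :=
        mul_le_mul_of_nonneg_right h6 hU.le
      rw [hD]
      have : U / (20 * ((K : ℝ) - 1)) = 1 / (20 * ((K : ℝ) - 1)) * U := by ring
      rw [this]
      nlinarith [h7]
    -- main bound on sum
    have hsum : ∑ i : Fin J, g (w i) (w (nxt i)) ≤ (J : ℝ) * (U + D) := by
      by_cases hex : ∃ i, w i = K ∧ w (nxt i) = 2
      · obtain ⟨i0, hw0, hw0'⟩ := hex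
        have hJ2 : 2 ≤ J := by
          by_contra h
          have hJ1 : J = 1 := by omega
          subst hJ1
          have : nxt i0 = i0 := by apply Fin.ext; simp
          rw [this, hw0] at hw0'; omega
        have hunique : ∀ i, w i = K → i = i0 := fun i h => hinj (h.trans hw0.symm)
        by_cases hasc : ∃ i1, w i1 + 2 ≤ w (nxt i1)
        · obtain ⟨i1, hi1⟩ := hasc
          have hz : g (w i1) (w (nxt i1)) = 0 := by
            have hle := (hwK (nxt i1)).2
            have := h2 (w i1) (w (nxt i1) - w i1) (hwK i1).1 (by omega) (by omega)
            rwa [show w i1 + (w (nxt i1) - w i1) = w (nxt i1) by omega] at this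
          have hne : i1 ≠ i0 := by
            intro h; subst h
            rw [hw0'] at hi1
            have := (hwK i1).1; omega
          have hptw : ∀ i : Fin J, g (w i) (w (nxt i)) ≤
              (1 + c) * U + ((if i = i0 then 11 / 10 * U - (1 + c) * U else 0)
                + (if i = i1 then -((1 + c) * U) else 0)) := by
            intro i
            by_cases hi0 : i = i0
            · subst hi0
              rw [if_pos rfl, if_neg (Ne.symm hne), hw0, hw0', h3]
              linarith
            · by_cases hi1' : i = i1
              · subst hi1'
                rw [if_neg hi0, if_pos rfl, hz]
                nlinarith [hc0, hU.le]
              · rw [if_neg hi0, if_neg hi1', add_zero, add_zero]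
                apply hB
                intro hKp
                rw [Prod.mk.injEq] at hKp
                exact hi0 (hunique i hKp.1)
          calc ∑ i : Fin J, g (w i) (w (nxt i))
              ≤ ∑ i : Fin J, ((1 + c) * U + ((if i = i0 then 11 / 10 * U - (1 + c) * U else 0)
                + (if i = i1 then -((1 + c) * U) else 0))) := Finset.sum_le_sum (fun i _ => hptw i)
            _ = (J : ℝ) * ((1 + c) * U) + ((11 / 10 * U - (1 + c) * U) + -((1 + c) * U)) := by
                rw [Finset.sum_add_distrib, Finset.sum_add_distrib, Finset.sum_const,
                  Finset.card_univ, Fintype.card_fin, nsmul_eq_mul]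
                rw [Finset.sum_ite_eq' univ i0 (fun _ => 11 / 10 * U - (1 + c) * U),
                  Finset.sum_ite_eq' univ i1 (fun _ => -((1 + c) * U))]
                simp
            _ ≤ (J : ℝ) * (U + D) := by
                have hJcU : (J : ℝ) * c * U ≤ 1 / 100 * U := by
                  have hKc : (K : ℝ) * c = 1 / 100 := by
                    rw [hc]; field_simp
                  have hJle : (J : ℝ) ≤ (K : ℝ) := by exact_mod_cast hJK
                  have hKcU : (K : ℝ) * c * U = 1 / 100 * U := by rw [hKc]
                  have hprod : 0 ≤ ((K : ℝ) - (J : ℝ)) * (c * U) :=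
                    mul_nonneg (by linarith) (by positivity)
                  nlinarith [hKcU, hprod]
                have hJD : 0 ≤ (J : ℝ) * D := by positivity
                have hcU : 0 ≤ c * U := by positivity
                have expand : (J : ℝ) * ((1 + c) * U) + ((11 / 10 * U - (1 + c) * U)
                    + -((1 + c) * U)) = (J : ℝ) * U + (J : ℝ) * c * U + 11 / 10 * U
                    - 2 * U - 2 * (c * U) := by ring
                have expand2 : (J : ℝ) * (U + D) = (J : ℝ) * U + (J : ℝ) * D := by ring
                linarith [hJcU, hJD, hcU, hU.le, expand, expand2]
        · push_neg at hasc
          have hstep : ∀ i : Fin J, w (nxt i) ≤ w i + 1 := fun i => by have := hasc i; omega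
          obtain ⟨hJeq, key⟩ := keyStruct K J hK hJ hJK w hinj hwK i0 hw0 hw0' hstep
          exfalso
          apply hrot
          refine ⟨by omega, (K - 2 - (i0 : ℕ)), ?_⟩
          intro i
          show w i = ((i : ℕ) + (K - 2 - (i0 : ℕ))) % (K - 1) + 2
          set t : ℕ := ((i : ℕ) + J - (i0 : ℕ)) % J with htdef
          have htJ : t < J := Nat.mod_lt _ hJ
          have hi0J : (i0 : ℕ) < J := i0.isLt
          have ht : ((i0 : ℕ) + t) % J = (i : ℕ) := by
            rw [htdef, Nat.add_mod_mod,
              show (i0 : ℕ) + ((i : ℕ) + J - (i0 : ℕ)) = (i : ℕ) + J by omega,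
              Nat.add_mod_right, Nat.mod_eq_of_lt i.isLt]
          rcases Nat.eq_zero_or_pos t with ht0 | ht1
          · have hii0 : i = i0 := by
              apply Fin.ext
              rw [← ht, ht0, Nat.add_zero, Nat.mod_eq_of_lt hi0J]
            rw [hii0, hw0]
            rw [show (i0 : ℕ) + (K - 2 - (i0 : ℕ)) = K - 2 by omega,
              Nat.mod_eq_of_lt (by omega)]
            omega
          · have hwt : w (⟨((i0 : ℕ) + t) % J, Nat.mod_lt _ hJ⟩ : Fin J) = t + 1 :=
              key t ht1 (by omega)
            have hidx : (⟨((i0 : ℕ) + t) % J, Nat.mod_lt _ hJ⟩ : Fin J) = i := by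
              apply Fin.ext; exact ht
            rw [hidx] at hwt
            rw [hwt]
            have : ((i : ℕ) + (K - 2 - (i0 : ℕ))) % (K - 1) = t - 1 := by
              have hstep1 : ((i0 : ℕ) + t) % J = ((i0 : ℕ) + t) % (K - 1) :=
                congrArg (fun m => ((i0 : ℕ) + t) % m) hJeq
              rw [← ht, hstep1, Nat.mod_add_mod,
                show (i0 : ℕ) + t + (K - 2 - (i0 : ℕ)) = (t - 1) + (K - 1) by omega,
                Nat.add_mod_right, Nat.mod_eq_of_lt (by omega)]
            rw [this]
            omega
      · push_neg at hex
        calc ∑ i : Fin J, g (w i) (w (nxt i))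
            ≤ ∑ _i : Fin J, (1 + c) * U := by
              apply Finset.sum_le_sum
              intro i _
              apply hB
              intro h
              rw [Prod.mk.injEq] at h
              exact hex i h.1 h.2
          _ = (J : ℝ) * ((1 + c) * U) := by
              rw [Finset.sum_const, Finset.card_univ, Fintype.card_fin, nsmul_eq_mul]
          _ ≤ (J : ℝ) * (U + D) := by
              apply mul_le_mul_of_nonneg_left hBle (by positivity)
    -- conclude
    have hJR : (0 : ℝ) < (J : ℝ) := by exact_mod_cast hJ
    have hfin : (1 / (J : ℝ)) * ∑ i : Fin J, g (w i) (w (nxt i)) ≤ U + D := by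
      rw [div_mul_eq_mul_div, one_mul, div_le_iff₀ hJR]
      linarith [hsum]
    have h2D : U / (10 * ((K : ℝ) - 1)) = 2 * D := by
      have hne : ((K : ℝ) - 1) ≠ 0 := ne_of_gt hKpos
      rw [hD]; field_simp; ring
    show α + (1 / (J : ℝ)) * ∑ i : Fin J, g (w i) (w (nxt i))
        ≤ α + U + U / (10 * ((K : ℝ) - 1)) - U / (20 * ((K : ℝ) - 1))
    linarith [hfin, h2D, hD]
end
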